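/- Let ∇ be a flat connection on a Lie algebra (R = 0). Then the dual connection ∇̄ is flat (R̄ = 0) if and only if the torsion of ∇ is parallel (∇T = 0). -/

import Mathlib

/-- Torsion of a connection on a Lie algebra. -/
def torsion {L : Type*} [LieRing L] (D : L → L → L) (X Y : L) : L := D X Y - D Y X - ⁅X, Y⁆

/-- Curvature of a connection on a Lie algebra. -/
def curvature {L : Type*} [LieRing L] (D : L → L → L) (X Y Z : L) : L :=
  D X (D Y Z) - D Y (D X Z) - D ⁅X, Y⁆ Z

/-- Dual connection. -/
def dualConn {L : Type*} [LieRing L] (D : L → L → L) (X Y : L) : L := D Y X + ⁅X, Y⁆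

/-- Covariant derivative of torsion: `(∇_Z T)(X,Y)`. -/
def covTorsion {L : Type*} [LieRing L] (D : L → L → L) (Z X Y : L) : L :=
  D Z (torsion D X Y) - torsion D (D Z X) Y - torsion D X (D Z Y)

/-!
For any biadditive connection, expanding `∇̄` and cancelling the double brackets by the Jacobi
identity gives `R̄(X,Y)Z = (∇_Z T)(X,Y) + R(X,Z)Y - R(Y,Z)X`; when `∇` is flat the last two
terms vanish, so `R̄ = 0` exactly when `∇T = 0`.
-/

theorem curvature_dualConn {L : Type*} [LieRing L] (D : L →+ L →+ L) (X Y Z : L) :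
    curvature (dualConn fun X Y => D X Y) X Y Z =
      covTorsion (fun X Y => D X Y) Z X Y + curvature (fun X Y => D X Y) X Z Y -
        curvature (fun X Y => D X Y) Y Z X := by
  simp only [curvature, dualConn, covTorsion, torsion, map_add, map_sub, AddMonoidHom.add_apply,
    lie_add]
  rw [leibniz_lie X Y Z, ← lie_skew Y (D Z X)]
  abel

theorem dual_flat_iff_parallel_torsion_general {K : Type*} [Field K]
    {L : Type*} [LieRing L] [LieAlgebra K L] (D : L →ₗ[K] L →ₗ[K] L)
    (hflat : ∀ X Y Z : L, curvature (fun X Y => D X Y) X Y Z = 0) :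
    (∀ X Y Z : L, curvature (dualConn (fun X Y => D X Y)) X Y Z = 0) ↔
      (∀ Z X Y : L, covTorsion (fun X Y => D X Y) Z X Y = 0) := by
  let D' : L →+ L →+ L := LinearMap.toAddMonoidHom'.comp D.toAddMonoidHom
  have dual_curvature_eq (X Y Z : L) :
      curvature (dualConn fun X Y => D X Y) X Y Z = covTorsion (fun X Y => D X Y) Z X Y := by
    have h : (fun X Y => D' X Y) = fun X Y => D X Y := rfl
    rw [← h, curvature_dualConn, h, hflat, hflat, add_zero, sub_zero]
  simp only [dual_curvature_eq]
  exact ⟨fun h Z X Y => h X Y Z, fun h X Y Z => h Z X Y⟩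

/-- If `∇` is flat, then `∇̄` is flat iff the torsion of `∇` is parallel. -/
theorem dual_flat_iff_parallel_torsion {K : Type*} [Field K] [CharZero K]
    {L : Type*} [LieRing L] [LieAlgebra K L] (D : L →ₗ[K] L →ₗ[K] L)
    (hflat : ∀ X Y Z : L, curvature (fun X Y => D X Y) X Y Z = 0) :
    (∀ X Y Z : L, curvature (dualConn (fun X Y => D X Y)) X Y Z = 0) ↔
      (∀ Z X Y : L, covTorsion (fun X Y => D X Y) Z X Y = 0) :=
  dual_flat_iff_parallel_torsion_general D hflat
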